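/- Let n ≥ 2 be an integer, μ1 ∈ ℝ with n+μ1 > 1, δ ≥ 0, κ := (μ1−1−√δ)/2, and p_* := 1 + (n−√δ+2)/(n+μ1−1). If n − d_*(n+μ1) < √δ < n+2, then 1 + (2−√δ)/(n+κ+√δ) < p_*. -/

import Mathlib

/-- `d_*(ν)`: zero for `ν ≤ 1`, and `(−1−ν+√(ν²+10ν−7))/2` for `ν > 1`. -/
noncomputable def dStar (ν : ℝ) : ℝ :=
  if 1 < ν then (-1 - ν + Real.sqrt (ν ^ 2 + 10 * ν - 7)) / 2 else 0

theorem two_sub_div_lt_sub_add_two_div {a μ s : ℝ} (hμ : 1 < a + μ) (has : 2 ≤ a + s)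
    (hs : s < a + 2) :
    (2 - s) / (a + (μ - 1 - s) / 2 + s) < (a - s + 2) / (a + μ - 1) := by
  have hA : 0 < a + (μ - 1 - s) / 2 + s := by linarith
  have hB : 0 < a + μ - 1 := by linarith
  rw [div_lt_div_iff₀ hA hB]
  -- After clearing denominators, twice the difference is
  -- `(a + 2 - s)(a + s) + (a + s - 2)(a + μ - 1)`.
  nlinarith [mul_pos (sub_pos.2 hs) (by linarith : (0 : ℝ) < a + s),
    mul_nonneg (sub_nonneg.2 has) hB.le]

theorem shift_exponent_lt_pStar_general (n : ℕ) (hn : 2 ≤ n) (μ1 δ : ℝ)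
    (hnμ : 1 < (n : ℝ) + μ1)
    (h2 : Real.sqrt δ < (n : ℝ) + 2) :
    1 + (2 - Real.sqrt δ) /
        ((n : ℝ) + (μ1 - 1 - Real.sqrt δ) / 2 + Real.sqrt δ) <
      1 + ((n : ℝ) - Real.sqrt δ + 2) / ((n : ℝ) + μ1 - 1) := by
  have hn2 : (2 : ℝ) ≤ n := by exact_mod_cast hn
  have hsum : 2 ≤ (n : ℝ) + Real.sqrt δ := by linarith [Real.sqrt_nonneg δ]
  exact add_lt_add_right (two_sub_div_lt_sub_add_two_div hnμ hsum h2) 1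

/-- For integer `n ≥ 2`, `n+μ1 > 1` and `n − d_*(n+μ1) < √δ < n+2`, one has
`1 + (2−√δ)/(n+κ+√δ) < p_*`. -/
theorem shift_exponent_lt_pStar (n : ℕ) (hn : 2 ≤ n) (μ1 δ : ℝ)
    (hnμ : 1 < (n : ℝ) + μ1) (hδ : 0 ≤ δ)
    (h1 : (n : ℝ) - dStar ((n : ℝ) + μ1) < Real.sqrt δ)
    (h2 : Real.sqrt δ < (n : ℝ) + 2) :
    1 + (2 - Real.sqrt δ) /
        ((n : ℝ) + (μ1 - 1 - Real.sqrt δ) / 2 + Real.sqrt δ) <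
      1 + ((n : ℝ) - Real.sqrt δ + 2) / ((n : ℝ) + μ1 - 1) :=
  shift_exponent_lt_pStar_general n hn μ1 δ hnμ h2
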